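/- arXiv:1305.2059 — 4 statements merged into one kernel-verified Lean document; each statement's English description precedes it below -/
import Mathlib

section
/- If H is a graph with maximum degree at most a, then H is (a²−a+1)-arrangeable. -/
open Finset

/-- An ordering `x` of the vertices of `H` is `a`-arrangeable if for each `i`,
the neighbours to the left of `xᵢ` (i.e. in `Lᵢ = {x₁,…,xᵢ}`) of the right-neighbours
of `xᵢ` (i.e. of `N(xᵢ) ∩ {x_{i+1},…,xₙ}`) number at most `a`. -/
def ArrangeableOrder {V : Type*} [Fintype V] (H : SimpleGraph V) (a : ℕ)
    (x : Fin (Fintype.card V) ≃ V) : Prop :=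
  ∀ i : Fin (Fintype.card V),
    ({ v : V | (∃ j, j ≤ i ∧ x j = v) ∧
        ∃ w : V, (∃ j, i < j ∧ x j = w) ∧ H.Adj (x i) w ∧ H.Adj w v } : Set V).ncard ≤ a

/-- A graph is `a`-arrangeable if it admits an `a`-arrangeable ordering of its vertices. -/
def Arrangeable {V : Type*} [Fintype V] (H : SimpleGraph V) (a : ℕ) : Prop :=
  ∃ x : Fin (Fintype.card V) ≃ V, ArrangeableOrder H a x

/-- Every graph with maximum degree at most `a` is `(a² - a + 1)`-arrangeable. -/
theorem arrangeable_of_maxDegree_le {V : Type*} [Fintype V] (H : SimpleGraph V)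
    [DecidableRel H.Adj] (a : ℕ) (hdeg : ∀ v : V, H.degree v ≤ a) :
    Arrangeable H (a ^ 2 - a + 1) := by
  classical
  refine ⟨(Fintype.equivFin V).symm, fun i => ?_⟩
  set x := (Fintype.equivFin V).symm with hx
  set T : Finset V := insert (x i)
      ((H.neighborFinset (x i)).biUnion (fun w => H.neighborFinset w \ {x i})) with hT
  have hsub : { v : V | (∃ j, j ≤ i ∧ x j = v) ∧
      ∃ w : V, (∃ j, i < j ∧ x j = w) ∧ H.Adj (x i) w ∧ H.Adj w v } ⊆ ↑T := by
    rintro v ⟨-, w, -, hxw, hwv⟩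
    by_cases hv : v = x i
    · simp [hT, hv]
    · simp only [hT, coe_insert, Set.mem_insert_iff, mem_coe, mem_biUnion,
        SimpleGraph.mem_neighborFinset, mem_sdiff, mem_singleton]
      exact Or.inr ⟨w, hxw, hwv, hv⟩
  have hle := Set.ncard_le_ncard hsub T.finite_toSet
  rw [Set.ncard_coe_finset] at hle
  have hcard : T.card ≤ a * (a - 1) + 1 := by
    refine (card_insert_le _ _).trans ?_
    have h1 : ((H.neighborFinset (x i)).biUnion
        (fun w => H.neighborFinset w \ {x i})).card ≤ a * (a - 1) := by
      refine (card_biUnion_le).trans ?_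
      calc ∑ w ∈ H.neighborFinset (x i), (H.neighborFinset w \ {x i}).card
          ≤ ∑ _w ∈ H.neighborFinset (x i), (a - 1) := by
            refine Finset.sum_le_sum fun w hw => ?_
            have hadj : H.Adj (x i) w := by rwa [SimpleGraph.mem_neighborFinset] at hw
            have hmem : x i ∈ H.neighborFinset w := by
              rw [SimpleGraph.mem_neighborFinset]; exact hadj.symm
            rw [card_sdiff_of_subset (by simpa using hmem), card_singleton]
            have hdw := hdeg w
            rw [← SimpleGraph.card_neighborFinset_eq_degree] at hdw
            omega
        _ = H.degree (x i) * (a - 1) := by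
            rw [sum_const, smul_eq_mul, SimpleGraph.card_neighborFinset_eq_degree]
        _ ≤ a * (a - 1) := Nat.mul_le_mul_right _ (hdeg _)
    omega
  have heq : a * (a - 1) + 1 = a ^ 2 - a + 1 := by
    have h2 : a ^ 2 = a * a := sq a
    have h3 : a * (a - 1) = a * a - a := by
      simpa using Nat.mul_pred a a
    omega
  omega
end

section
/- In the setting of the weighted matching lemma, the König–Hall criterion holds: for a weighted ε-regular balanced bipartite pair (A,B) with |A| = |B| = n, weight function ω: A → [√ε, 1], and minimum degree greater than 2√ε·n on both sides, every set S ⊆ A satisfies |N(S)| ≥ |S|. -/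
open Finset
open scoped Classical

noncomputable def wDensity {α β : Type*} (E : α → β → Prop) (ω : α → ℝ)
    (A : Finset α) (B : Finset β) : ℝ :=
  (∑ x ∈ A, ω x * ((B.filter fun y => E x y).card : ℝ)) / ((A.card : ℝ) * (B.card : ℝ))

def WeightedRegular {α β : Type*} (ε : ℝ) (E : α → β → Prop) (ω : α → ℝ)
    (A : Finset α) (B : Finset β) : Prop :=
  ∀ A' ⊆ A, ∀ B' ⊆ B, ε * A.card ≤ A'.card → ε * B.card ≤ B'.card →
    |wDensity E ω A B - wDensity E ω A' B'| ≤ ε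

/-- König–Hall criterion for weighted regular pairs: for a weighted `ε`-regular balanced
bipartite pair `(A,B)` with `|A| = |B| = n`, weights in `[√ε, 1]`, and minimum degree
greater than `2√ε·n` on both sides, every `S ⊆ A` satisfies `|N(S)| ≥ |S|`. -/
theorem weightedRegular_hall {α β : Type*} (ε : ℝ) (hε : 0 < ε) (n : ℕ)
    (E : α → β → Prop) (ω : α → ℝ) (A : Finset α) (B : Finset β)
    (hA : A.card = n) (hB : B.card = n)
    (hω : ∀ x ∈ A, Real.sqrt ε ≤ ω x ∧ ω x ≤ 1)
    (hreg : WeightedRegular ε E ω A B)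
    (hdegA : ∀ x ∈ A, 2 * Real.sqrt ε * n < ((B.filter fun y => E x y).card : ℝ))
    (hdegB : ∀ y ∈ B, 2 * Real.sqrt ε * n < ((A.filter fun x => E x y).card : ℝ)) :
    ∀ S ⊆ A, S.card ≤ (B.filter fun y => ∃ x ∈ S, E x y).card := by
  intro S hS
  rcases S.eq_empty_or_nonempty with rfl | hSne
  · simp
  by_contra hcon
  push_neg at hcon
  set NS := B.filter fun y => ∃ x ∈ S, E x y with hNSdef
  obtain ⟨x0, hx0⟩ := hSne
  have hx0A := hS hx0
  have hsub : (B.filter fun y => E x0 y) ⊆ NS := by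
    intro y hy
    simp only [hNSdef, mem_filter] at hy ⊢
    exact ⟨hy.1, x0, hx0, hy.2⟩
  have h1 : 2 * Real.sqrt ε * n < (NS.card : ℝ) :=
    (hdegA x0 hx0A).trans_le (by exact_mod_cast Finset.card_le_card hsub)
  have h2 : (NS.card : ℝ) < S.card := by exact_mod_cast hcon
  have hSbig : 2 * Real.sqrt ε * n < (S.card : ℝ) := h1.trans h2
  have hScard : (S.card : ℝ) ≤ n := by
    exact_mod_cast hA ▸ Finset.card_le_card hS
  have hs0 : (0:ℝ) ≤ Real.sqrt ε := Real.sqrt_nonneg ε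
  have hn0 : (0:ℝ) < n := by
    have h01 : 0 < S.card := Finset.card_pos.2 ⟨x0, hx0⟩
    have : (0:ℝ) < S.card := by exact_mod_cast h01
    linarith
  have h2s : 2 * Real.sqrt ε < 1 := by nlinarith [hSbig, hScard, hn0]
  have hε2 : ε ≤ 2 * Real.sqrt ε := by
    nlinarith [Real.mul_self_sqrt hε.le, hs0, h2s]
  by_cases hcase : (n:ℝ) - S.card < 2 * Real.sqrt ε * n
  · -- every vertex of B has a neighbour in S
    have hBsub : B ⊆ NS := by
      intro y hy
      set T := A.filter fun x => E x y with hT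
      have hTcard : 2 * Real.sqrt ε * n < (T.card : ℝ) := hdegB y hy
      have hunion : ((T ∪ S).card : ℝ) ≤ n := by
        have hsub2 : T ∪ S ⊆ A := Finset.union_subset (Finset.filter_subset _ _) hS
        exact_mod_cast hA ▸ Finset.card_le_card hsub2
      have hint : (0:ℝ) < ((T ∩ S).card : ℝ) := by
        have hi := Finset.card_union_add_card_inter T S
        have hi' : ((T ∪ S).card : ℝ) + ((T ∩ S).card : ℝ) = (T.card : ℝ) + S.card := by
          exact_mod_cast hi
        nlinarith
      have hne : (T ∩ S).Nonempty := Finset.card_pos.1 (by exact_mod_cast hint)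
      obtain ⟨x, hx⟩ := hne
      simp only [hT, Finset.mem_inter, Finset.mem_filter] at hx
      simp only [hNSdef, Finset.mem_filter]
      exact ⟨hy, x, hx.2, hx.1.2⟩
    have hle : (n:ℝ) ≤ NS.card := by exact_mod_cast hB ▸ Finset.card_le_card hBsub
    linarith
  · push_neg at hcase
    set B' := B \ NS with hB'
    have hB'sub : B' ⊆ B := Finset.sdiff_subset
    have hNSsubB : NS ⊆ B := Finset.filter_subset _ _
    have hNSn : NS.card ≤ n := hB ▸ Finset.card_le_card hNSsubB
    have hB'card : (B'.card : ℝ) = n - NS.card := by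
      rw [hB', Finset.card_sdiff_of_subset hNSsubB, hB, Nat.cast_sub hNSn]
    have hεs : ε * (n:ℝ) ≤ 2 * Real.sqrt ε * n := mul_le_mul_of_nonneg_right hε2 hn0.le
    have hSa : ε * (A.card:ℝ) ≤ S.card := by rw [hA]; linarith
    have hB'a : ε * (B.card:ℝ) ≤ B'.card := by rw [hB]; linarith
    have hdSB' : wDensity E ω S B' = 0 := by
      have hz : ∀ x ∈ S, ω x * ((B'.filter fun y => E x y).card : ℝ) = 0 := by
        intro x hx
        have he : (B'.filter fun y => E x y) = ∅ := by
          rw [Finset.filter_eq_empty_iff]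
          intro y hy hxy
          rw [hB', Finset.mem_sdiff] at hy
          exact hy.2 (by simp only [hNSdef, Finset.mem_filter]; exact ⟨hy.1, x, hx, hxy⟩)
        rw [he]; simp
      rw [wDensity, Finset.sum_eq_zero hz, zero_div]
    have hdAB : 2 * ε < wDensity E ω A B := by
      have hterm : ∀ x ∈ A, 2 * ε * n < ω x * ((B.filter fun y => E x y).card : ℝ) := by
        intro x hx
        have hd := hdegA x hx
        have hwx := (hω x hx).1
        have hsp : 0 < Real.sqrt ε := Real.sqrt_pos.2 hε
        calc 2 * ε * n = Real.sqrt ε * (2 * Real.sqrt ε * n) := by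
              linear_combination (-2 * (n:ℝ)) * Real.mul_self_sqrt hε.le
          _ < Real.sqrt ε * ((B.filter fun y => E x y).card : ℝ) := by
              exact (mul_lt_mul_iff_right₀ hsp).2 hd
          _ ≤ ω x * ((B.filter fun y => E x y).card : ℝ) :=
              mul_le_mul_of_nonneg_right hwx (Nat.cast_nonneg _)
      have hAne : A.Nonempty := ⟨x0, hx0A⟩
      have hsum := Finset.sum_lt_sum_of_nonempty hAne hterm
      rw [Finset.sum_const, hA, nsmul_eq_mul] at hsum
      rw [wDensity, hA, hB, lt_div_iff₀ (by positivity)]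
      nlinarith [hsum]
    have hfin := hreg S hS B' hB'sub hSa hB'a
    rw [hdSB', sub_zero] at hfin
    have habs := abs_le.1 hfin
    linarith [habs.2, hdAB]
end

section
/- Let 0 ≤ p₁ ≤ 1 and let A₁,…,Aₙ be {0,1}-valued random variables such that P[Aᵢ = 1 | any outcome of A₁,…,A_{i−1}] ≥ p₁ whenever the conditioning event has positive probability. Then for every ℓ ≤ n and every k ≥ 0, P[Σ_{i≤ℓ} Aᵢ ≤ k] ≤ P[B(ℓ, p₁) ≤ k], where B(ℓ, p₁) is a binomial random variable with parameters ℓ and p₁. -/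
open MeasureTheory Finset
open scoped Classical ENNReal

/-- The event that, among the variables `A_j` with `j < i`, exactly those with `j ∈ J`
occur. -/
def histEvent {Ω : Type*} {n : ℕ} (E : Fin n → Set Ω) (i : Fin n)
    (J : Finset (Fin n)) : Set Ω :=
  { ω | ∀ j : Fin n, j < i → (ω ∈ E j ↔ j ∈ J) }

/-! Write `S_ℓ` for the number of `i < ℓ` with `ω ∈ E i`. Induct on `ℓ`: the event `{S_ℓ = m}` is
a disjoint union of history events, on each of which `E ℓ` fails with probability at most
`1 - p₁`, so `P[S_{ℓ+1} < m + 1] ≤ (1 - p₁) P[S_ℓ < m + 1] + p₁ P[S_ℓ < m]`, while the binomial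
distribution satisfies the same recursion with equality (Pascal's rule).
Working with `P[· < m]` rather than `P[· ≤ k]` makes `m = 0` an honest base case. -/

noncomputable def binomialWeight (p : ℝ) (ℓ j : ℕ) : ℝ :=
  ℓ.choose j * p ^ j * (1 - p) ^ (ℓ - j)

lemma binomialWeight_succ_zero (p : ℝ) (ℓ : ℕ) :
    binomialWeight p (ℓ + 1) 0 = (1 - p) * binomialWeight p ℓ 0 := by
  simp [binomialWeight, pow_succ]; ring

lemma binomialWeight_succ_succ (p : ℝ) (ℓ j : ℕ) :
    binomialWeight p (ℓ + 1) (j + 1) =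
      (1 - p) * binomialWeight p ℓ (j + 1) + p * binomialWeight p ℓ j := by
  unfold binomialWeight
  rcases lt_or_ge ℓ (j + 1) with h | h
  · rw [Nat.choose_eq_zero_of_lt h, Nat.succ_sub_succ]
    push_cast [Nat.choose_succ_succ, Nat.choose_eq_zero_of_lt h]
    ring
  · obtain ⟨d, rfl⟩ := Nat.exists_eq_add_of_le h
    rw [Nat.choose_succ_succ, show j + 1 + d + 1 - (j + 1) = d + 1 by omega,
      show j + 1 + d - (j + 1) = d by omega, show j + 1 + d - j = d + 1 by omega]
    push_cast
    ring

lemma sum_range_binomialWeight_succ (p : ℝ) (ℓ m : ℕ) :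
    ∑ j ∈ range (m + 1), binomialWeight p (ℓ + 1) j =
      (1 - p) * ∑ j ∈ range (m + 1), binomialWeight p ℓ j +
        p * ∑ j ∈ range m, binomialWeight p ℓ j := by
  simp only [sum_range_succ', binomialWeight_succ_succ, binomialWeight_succ_zero, sum_add_distrib,
    mul_add, mul_sum]
  ring

lemma sum_range_binomialWeight_zero (p : ℝ) (m : ℕ) :
    ∑ j ∈ range (m + 1), binomialWeight p 0 j = 1 := by
  simp [sum_range_succ', binomialWeight]

section Occurrences

variable {Ω : Type*} {n : ℕ} (E : Fin n → Set Ω)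

-- The paper's `Σ_{i≤ℓ} Aᵢ` is `#(occurrences E ℓ ω)`, with `Aᵢ` the indicator of `E (i - 1)`.
noncomputable def occurrences (ℓ : ℕ) (ω : Ω) : Finset (Fin n) :=
  univ.filter fun i : Fin n => (i : ℕ) < ℓ ∧ ω ∈ E i

lemma occurrences_subset_Iio (i : Fin n) (ω : Ω) : occurrences E i ω ⊆ Iio i := by
  intro j hj
  rw [occurrences, mem_filter] at hj
  exact mem_Iio.2 (Fin.lt_def.2 hj.2.1)

lemma histEvent_eq_preimage {i : Fin n} {J : Finset (Fin n)} (hJ : J ⊆ Iio i) :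
    histEvent E i J = occurrences E i ⁻¹' {J} := by
  ext ω
  simp only [histEvent, occurrences, Set.mem_ofPred_eq, Set.mem_preimage, Set.mem_singleton_iff,
    Finset.ext_iff, mem_filter, mem_univ, true_and, ← Fin.lt_def]
  grind

lemma occurrences_succ {ℓ : ℕ} (hℓ : ℓ < n) (ω : Ω) :
    occurrences E (ℓ + 1) ω =
      if ω ∈ E ⟨ℓ, hℓ⟩ then insert ⟨ℓ, hℓ⟩ (occurrences E ℓ ω) else occurrences E ℓ ω := by
  ext j
  simp only [occurrences]
  split_ifs with h <;> simp [Fin.ext_iff] <;> grind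

lemma card_occurrences_succ {ℓ : ℕ} (hℓ : ℓ < n) (ω : Ω) :
    #(occurrences E (ℓ + 1) ω) = #(occurrences E ℓ ω) + if ω ∈ E ⟨ℓ, hℓ⟩ then 1 else 0 := by
  rw [occurrences_succ E hℓ]
  split_ifs
  · refine card_insert_of_notMem fun h => ?_
    simp [occurrences] at h
  · rfl

variable [MeasurableSpace Ω]

lemma measurableSet_occurrences_preimage (hE : ∀ i, MeasurableSet (E i)) (ℓ : ℕ)
    (𝒥 : Set (Finset (Fin n))) : MeasurableSet (occurrences E ℓ ⁻¹' 𝒥) := by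
  rw [← Set.biUnion_preimage_singleton]
  refine .biUnion (Set.to_countable 𝒥) fun J _ => ?_
  have : occurrences E ℓ ⁻¹' {J} = ⋂ j : Fin n, {ω | (j : ℕ) < ℓ ∧ ω ∈ E j ↔ j ∈ J} := by
    ext ω
    simp [occurrences, Finset.ext_iff]
  rw [this]
  exact .iInter fun j => .iff (.inter (.const _) (hE j)) (.const _)


variable {μ : Measure Ω}

lemma measureReal_occurrences_sdiff_le [IsFiniteMeasure μ] (hE : ∀ i, MeasurableSet (E i))
    {p : ℝ} (hp : 0 ≤ p) {i : Fin n}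
    (hcond : ∀ J ⊆ Iio i, ENNReal.ofReal p * μ (histEvent E i J) ≤ μ (E i ∩ histEvent E i J))
    (P : Finset (Fin n) → Prop) :
    μ.real ({ω | P (occurrences E i ω)} \ E i) ≤
      (1 - p) * μ.real {ω | P (occurrences E i ω)} := by
  set 𝒥 := (Iio i).powerset.filter P
  have hset : {ω | P (occurrences E i ω)} = occurrences E i ⁻¹' 𝒥 := by
    ext ω
    simp [𝒥, occurrences_subset_Iio]
  have hfiber J : MeasurableSet (occurrences E i ⁻¹' {J}) :=
    measurableSet_occurrences_preimage E hE i {J}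
  have hA : MeasurableSet (occurrences E i ⁻¹' 𝒥) := measurableSet_occurrences_preimage E hE i _
  have hinter : p * μ.real (occurrences E i ⁻¹' 𝒥) ≤ μ.real (occurrences E i ⁻¹' 𝒥 ∩ E i) := by
    rw [← measureReal_restrict_apply hA,
      ← sum_measureReal_preimage_singleton _ fun J _ => hfiber J,
      ← sum_measureReal_preimage_singleton _ fun J _ => hfiber J, mul_sum]
    refine sum_le_sum fun J hJ => ?_
    have hJi : J ⊆ Iio i := mem_powerset.1 (mem_filter.1 hJ).1
    have h := ENNReal.toReal_mono (measure_ne_top _ _) (hcond J hJi)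
    rwa [ENNReal.toReal_mul, ENNReal.toReal_ofReal hp, ← measureReal_def, ← measureReal_def,
      Set.inter_comm, histEvent_eq_preimage E hJi, ← measureReal_restrict_apply (hfiber J)] at h
  rw [hset]
  linarith [measureReal_sdiff_add_inter (μ := μ) (s := occurrences E i ⁻¹' 𝒥) (hE i)]

lemma measureReal_card_occurrences_succ_lt_le [IsFiniteMeasure μ]
    (hE : ∀ i, MeasurableSet (E i)) {p : ℝ} (hp : 0 ≤ p)
    (hcond : ∀ (i : Fin n) (J : Finset (Fin n)), J ⊆ Iio i →
      ENNReal.ofReal p * μ (histEvent E i J) ≤ μ (E i ∩ histEvent E i J))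
    {ℓ : ℕ} (hℓ : ℓ < n) (m : ℕ) :
    μ.real {ω | #(occurrences E (ℓ + 1) ω) < m + 1} ≤
      (1 - p) * μ.real {ω | #(occurrences E ℓ ω) < m + 1} +
        p * μ.real {ω | #(occurrences E ℓ ω) < m} := by
  set i : Fin n := ⟨ℓ, hℓ⟩
  have hsub : {ω | #(occurrences E (ℓ + 1) ω) < m + 1} ⊆
      {ω | #(occurrences E i ω) = m} \ E i ∪ {ω | #(occurrences E ℓ ω) < m} := by
    intro ω hω
    by_cases h : ω ∈ E i <;>
      simp [card_occurrences_succ E hℓ, h, i] at hω ⊢ <;> omega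
  have hsplit : μ.real {ω | #(occurrences E ℓ ω) < m + 1} =
      μ.real {ω | #(occurrences E i ω) = m} + μ.real {ω | #(occurrences E ℓ ω) < m} := by
    have hunion : {ω | #(occurrences E ℓ ω) < m + 1} =
        {ω | #(occurrences E i ω) = m} ∪ {ω | #(occurrences E ℓ ω) < m} := by
      ext ω
      exact Nat.lt_succ_iff_lt_or_eq.trans or_comm
    have hdisj : Disjoint {ω | #(occurrences E i ω) = m} {ω | #(occurrences E ℓ ω) < m} :=
      Set.disjoint_left.2 fun ω (h : #(occurrences E i ω) = m) (h' : #(occurrences E ℓ ω) < m) =>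
        h'.ne h
    rw [hunion, measureReal_union hdisj (measurableSet_occurrences_preimage E hE ℓ {J | #J < m})]
  have hdiff := measureReal_occurrences_sdiff_le E hE hp (hcond i) (#· = m)
  calc μ.real {ω | #(occurrences E (ℓ + 1) ω) < m + 1}
      ≤ μ.real ({ω | #(occurrences E i ω) = m} \ E i ∪ {ω | #(occurrences E ℓ ω) < m}) :=
        measureReal_mono hsub
    _ ≤ μ.real ({ω | #(occurrences E i ω) = m} \ E i) +
          μ.real {ω | #(occurrences E ℓ ω) < m} := measureReal_union_le _ _
    _ ≤ _ := by rw [hsplit]; linarith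

lemma measureReal_card_occurrences_lt_le [IsProbabilityMeasure μ]
    (hE : ∀ i, MeasurableSet (E i)) {p : ℝ} (hp : 0 ≤ p) (hp' : p ≤ 1)
    (hcond : ∀ (i : Fin n) (J : Finset (Fin n)), J ⊆ Iio i →
      ENNReal.ofReal p * μ (histEvent E i J) ≤ μ (E i ∩ histEvent E i J)) :
    ∀ ℓ ≤ n, ∀ m,
      μ.real {ω | #(occurrences E ℓ ω) < m} ≤ ∑ j ∈ range m, binomialWeight p ℓ j := by
  intro ℓ
  induction ℓ with
  | zero =>
    rintro - (_ | m)
    · simp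
    · rw [sum_range_binomialWeight_zero]
      exact measureReal_le_one
  | succ ℓ ih =>
    rintro hℓ (_ | m)
    · simp
    calc μ.real {ω | #(occurrences E (ℓ + 1) ω) < m + 1}
        ≤ (1 - p) * μ.real {ω | #(occurrences E ℓ ω) < m + 1} +
            p * μ.real {ω | #(occurrences E ℓ ω) < m} :=
          measureReal_card_occurrences_succ_lt_le E hE hp hcond hℓ m
      _ ≤ (1 - p) * ∑ j ∈ range (m + 1), binomialWeight p ℓ j +
            p * ∑ j ∈ range m, binomialWeight p ℓ j := by
          have hℓ' := ih (by omega)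
          exact add_le_add (mul_le_mul_of_nonneg_left (hℓ' (m + 1)) (by linarith))
            (mul_le_mul_of_nonneg_left (hℓ' m) hp)
      _ = _ := (sum_range_binomialWeight_succ p ℓ m).symm

end Occurrences

/-- Stochastic domination of partial sums of pseudo-independent indicators by a binomial:
if `P[Aᵢ = 1 | any outcome of A₁,…,A_{i−1}] ≥ p₁`, then for every `ℓ ≤ n` and `k ≥ 0`,
`P[Σ_{i≤ℓ} Aᵢ ≤ k] ≤ P[B(ℓ,p₁) ≤ k]`, the latter being the binomial CDF
`Σ_{j≤k} C(ℓ,j) p₁ʲ (1−p₁)^{ℓ−j}`. -/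
theorem pseudo_binomial_domination {Ω : Type*} [MeasurableSpace Ω] (μ : Measure Ω)
    [IsProbabilityMeasure μ] {n : ℕ} (E : Fin n → Set Ω)
    (hmeas : ∀ i, MeasurableSet (E i))
    (p₁ : ℝ) (hp₁ : 0 ≤ p₁) (hp₁' : p₁ ≤ 1)
    (hcond : ∀ (i : Fin n) (J : Finset (Fin n)), J ⊆ Finset.Iio i →
      ENNReal.ofReal p₁ * μ (histEvent E i J) ≤ μ (E i ∩ histEvent E i J)) :
    ∀ ℓ ≤ n, ∀ k : ℕ,
      μ { ω | (Finset.univ.filter fun i : Fin n => (i : ℕ) < ℓ ∧ ω ∈ E i).card ≤ k } ≤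
        ENNReal.ofReal
          (∑ j ∈ Finset.range (k + 1),
            (ℓ.choose j : ℝ) * p₁ ^ j * (1 - p₁) ^ (ℓ - j)) := by
  intro ℓ hℓ k
  have h := measureReal_card_occurrences_lt_le E hmeas hp₁ hp₁' hcond ℓ hℓ (k + 1)
  simp only [Nat.lt_succ_iff] at h
  rw [← ofReal_measureReal]
  exact ENNReal.ofReal_le_ofReal h
end

section
/- If H is an a-arrangeable graph with arrangeable ordering (x₁,…,xₙ), W ⊆ V(H) is an independent set all of whose vertices have degree at most D in H, and a new ordering is formed by moving all vertices of W to the end (in any order), then the new ordering is (a + aD)-arrangeable. -/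
open Finset

/-- If `x` is an `a`-arrangeable ordering of `H`, `W` is an independent set whose vertices
all have degree at most `D`, and `y` is an ordering obtained from `x` by moving all
vertices of `W` to the end (in any order, keeping the relative order of the remaining
vertices), then `y` is `(a + a·D)`-arrangeable. -/
theorem arrangeable_move_independent_to_end {V : Type*} [Fintype V] [DecidableEq V]
    (H : SimpleGraph V) [DecidableRel H.Adj] (a D : ℕ)
    (x : Fin (Fintype.card V) ≃ V) (hx : ArrangeableOrder H a x)
    (W : Set V)
    (hWindep : ∀ u ∈ W, ∀ v ∈ W, ¬H.Adj u v)
    (hWdeg : ∀ v ∈ W, H.degree v ≤ D)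
    (y : Fin (Fintype.card V) ≃ V)
    (hend : ∀ j k : Fin (Fintype.card V), y j ∉ W → y k ∈ W → j < k)
    (horder : ∀ j k : Fin (Fintype.card V), j < k → y j ∉ W → y k ∉ W →
      x.symm (y j) < x.symm (y k)) :
    ArrangeableOrder H (a + a * D) y := by
  classical
  intro i
  by_cases hW : y i ∈ W
  · have hempty : ({ v : V | (∃ j, j ≤ i ∧ y j = v) ∧
        ∃ w : V, (∃ j, i < j ∧ y j = w) ∧ H.Adj (y i) w ∧ H.Adj w v } : Set V) = ∅ := by
      ext v
      simp only [Set.mem_setOf_eq, Set.mem_empty_iff_false, iff_false, not_and]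
      rintro - ⟨w, ⟨k, hik, rfl⟩, hadj1, -⟩
      have hkW : y k ∈ W := by
        by_contra h
        exact absurd (hend k i h hW) (not_lt.mpr hik.le)
      exact hWindep _ hW _ hkW hadj1
    rw [hempty]
    simp
  · set i' : Fin (Fintype.card V) := x.symm (y i) with hi'
    have hxu : x i' = y i := x.apply_symm_apply _
    set LW : Finset V := Finset.univ.filter (fun z => H.Adj (y i) z ∧ x.symm z < i') with hLWdef
    have hmemLW : ∀ z, z ∈ LW ↔ H.Adj (y i) z ∧ x.symm z < i' := by
      intro z; simp [hLWdef]
    have hLW : LW.card ≤ a := by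
      rcases LW.eq_empty_or_nonempty with h | h
      · simp [h]
      · obtain ⟨z₀, hz₀, hmax⟩ := LW.exists_max_image (fun z => x.symm z) h
        set j := x.symm z₀ with hj
        have hxz₀ : x j = z₀ := x.apply_symm_apply _
        have hz₀' := (hmemLW z₀).mp hz₀
        have hsub : (↑LW : Set V) ⊆ { v : V | (∃ k, k ≤ j ∧ x k = v) ∧
            ∃ w : V, (∃ k, j < k ∧ x k = w) ∧ H.Adj (x j) w ∧ H.Adj w v } := by
          intro z hz
          have hz' := (hmemLW z).mp hz
          refine ⟨⟨x.symm z, hmax z hz, x.apply_symm_apply z⟩,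
            y i, ⟨i', hz₀'.2, hxu⟩, ?_, hz'.1⟩
          rw [hxz₀]
          exact hz₀'.1.symm
        calc LW.card = (↑LW : Set V).ncard := (Set.ncard_coe_finset LW).symm
          _ ≤ _ := Set.ncard_le_ncard hsub (Set.toFinite _)
          _ ≤ a := hx j
    set F : Finset V := LW.filter (· ∈ W) with hF
    set BU : Set V := (↑(F.biUnion (fun z => H.neighborFinset z)) : Set V) with hBU
    have hcover : ({ v : V | (∃ j, j ≤ i ∧ y j = v) ∧
        ∃ w : V, (∃ j, i < j ∧ y j = w) ∧ H.Adj (y i) w ∧ H.Adj w v } : Set V)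
        ⊆ ({ v : V | (∃ j, j ≤ i' ∧ x j = v) ∧
        ∃ w : V, (∃ j, i' < j ∧ x j = w) ∧ H.Adj (x i') w ∧ H.Adj w v } : Set V)
          ∪ BU := by
      rintro v ⟨⟨j, hj, rfl⟩, w, ⟨k, hk, rfl⟩, hadj1, hadj2⟩
      have hvW : y j ∉ W := fun h => absurd (hend i j hW h) (not_lt.mpr hj)
      have hvpos : x.symm (y j) ≤ i' := by
        rcases lt_or_eq_of_le hj with h | h
        · exact (horder j i h hvW hW).le
        · rw [h]
      by_cases hwW : y k ∈ W
      · by_cases hwpos : i' < x.symm (y k)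
        · left
          exact ⟨⟨x.symm (y j), hvpos, x.apply_symm_apply _⟩,
            y k, ⟨x.symm (y k), hwpos, x.apply_symm_apply _⟩, by rwa [hxu], hadj2⟩
        · right
          have hne : y k ≠ y i := fun h => H.irrefl (h ▸ hadj1)
          have hlt : x.symm (y k) < i' := by
            refine lt_of_le_of_ne (not_lt.mp hwpos) (fun h => hne ?_)
            have := congrArg x h
            rwa [x.apply_symm_apply, hxu] at this
          rw [hBU]
          refine Finset.mem_coe.mpr (Finset.mem_biUnion.mpr ⟨y k, ?_, ?_⟩)
          · rw [hF, Finset.mem_filter]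
            exact ⟨(hmemLW _).mpr ⟨hadj1, hlt⟩, hwW⟩
          · rw [SimpleGraph.mem_neighborFinset]
            exact hadj2
      · left
        have hkpos : i' < x.symm (y k) := horder i k hk hW hwW
        exact ⟨⟨x.symm (y j), hvpos, x.apply_symm_apply _⟩,
          y k, ⟨x.symm (y k), hkpos, x.apply_symm_apply _⟩, by rwa [hxu], hadj2⟩
    have hbU : (F.biUnion (fun z => H.neighborFinset z)).card ≤ a * D := by
      calc (F.biUnion (fun z => H.neighborFinset z)).card ≤ ∑ z ∈ F, (H.neighborFinset z).card :=
            Finset.card_biUnion_le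
        _ ≤ ∑ _z ∈ F, D := by
            refine Finset.sum_le_sum ?_
            intro z hz
            rw [SimpleGraph.card_neighborFinset_eq_degree]
            exact hWdeg z (Finset.mem_filter.mp hz).2
        _ = F.card * D := by rw [Finset.sum_const, smul_eq_mul]
        _ ≤ LW.card * D := Nat.mul_le_mul_right D (Finset.card_filter_le _ _)
        _ ≤ a * D := Nat.mul_le_mul_right D hLW
    calc ({ v : V | (∃ j, j ≤ i ∧ y j = v) ∧
        ∃ w : V, (∃ j, i < j ∧ y j = w) ∧ H.Adj (y i) w ∧ H.Adj w v } : Set V).ncard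
        ≤ (({ v : V | (∃ j, j ≤ i' ∧ x j = v) ∧
        ∃ w : V, (∃ j, i' < j ∧ x j = w) ∧ H.Adj (x i') w ∧ H.Adj w v } : Set V)
          ∪ BU).ncard :=
          Set.ncard_le_ncard hcover (Set.toFinite _)
      _ ≤ ({ v : V | (∃ j, j ≤ i' ∧ x j = v) ∧
        ∃ w : V, (∃ j, i' < j ∧ x j = w) ∧ H.Adj (x i') w ∧ H.Adj w v } : Set V).ncard
          + BU.ncard := Set.ncard_union_le _ _
      _ ≤ a + a * D := by
          gcongr
          · exact hx i'
          · rw [hBU, Set.ncard_coe_finset]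
            exact hbU
end
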